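/- arXiv:1905.08001 — 2 statements merged into one kernel-verified Lean document; each statement's English description precedes it below -/
import Mathlib

section
/- Let F be a multigraph with t vertices, let k ≥ 1 and K ≥ 1, let H = F^{2k-1}, and let r = R_k(t) be the k-colour Ramsey number of t. Let G be an H-free K-almost-regular graph on n vertices with minimum degree δ > 0, and let S ⊆ V(G) satisfy |S| ≥ 2nr/δ^k. Then there are at least |S|²δ^{2k}/(4r²n) vectors (u_{−k}, u_{−k+1}, …, u_k) ∈ V(G)^{2k+1} such that (i) u_{−k} ∈ S and u_k ∈ S, (ii) u_ℓ is adjacent to u_{ℓ+1} in G for every −k ≤ ℓ ≤ k−1, and (iii) the pair (u_{−ℓ}, u_ℓ) is (i,j)-poor (with parameters k, h = |V(H)|, K, δ) for every 1 ≤ ℓ ≤ k and every 0 ≤ i, j ≤ k−1. -/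
open SimpleGraph

variable {V : Type*} [Fintype V] [DecidableEq V]

/-- The restriction of `p : ℕ → V` to `[0, ℓ]` is a path in `G`: consecutive vertices are
adjacent and all vertices `p 0, …, p ℓ` are distinct. -/
def PathSeq (G : SimpleGraph V) (ℓ : ℕ) (p : ℕ → V) : Prop :=
  (∀ i, i < ℓ → G.Adj (p i) (p (i + 1))) ∧
  ∀ i j, i < j → j ≤ ℓ → p i ≠ p j

/-- `p` is padded beyond index `ℓ`; used so that each finite sequence corresponds to a
unique function `ℕ → V` when counting. -/
def PadSeq (ℓ : ℕ) (p : ℕ → V) : Prop := ∀ i, ℓ ≤ i → p i = p ℓ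

/-- `f(ℓ, L) = L^(5^ℓ)`. -/
noncomputable def fBound (ℓ : ℕ) (L : ℝ) : ℝ := L ^ (5 ^ ℓ)

/-- The recursive notion of an `L`-good path of length `ℓ` (as a sequence `p 0, …, p ℓ`):
`p` is a path, every proper subpath is `L`-good, and the number of `L`-admissible paths of
length `ℓ` from `p 0` to `p ℓ` is at most `f(ℓ, L)`. -/
def Good (G : SimpleGraph V) (L : ℝ) (ℓ : ℕ) (p : ℕ → V) : Prop :=
  (PathSeq G ℓ p ∧
    ∀ i j, i < j → j ≤ ℓ → ¬(i = 0 ∧ j = ℓ) → Good G L (j - i) (fun a => p (i + a))) ∧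
  (Set.ncard {q : ℕ → V | q 0 = p 0 ∧ q ℓ = p ℓ ∧ PadSeq ℓ q ∧ PathSeq G ℓ q ∧
      ∀ i j, i < j → j ≤ ℓ → ¬(i = 0 ∧ j = ℓ) → Good G L (j - i) (fun a => q (i + a))} : ℝ)
    ≤ fBound ℓ L
termination_by ℓ
decreasing_by all_goals omega

/-- `L`-admissible: a path all of whose proper subpaths are `L`-good. -/
def Admissible (G : SimpleGraph V) (L : ℝ) (ℓ : ℕ) (p : ℕ → V) : Prop :=
  PathSeq G ℓ p ∧
    ∀ i j, i < j → j ≤ ℓ → ¬(i = 0 ∧ j = ℓ) → Good G L (j - i) (fun a => p (i + a))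

/-- There exist `N` pairwise internally vertex-disjoint paths of length `m` from `x` to `y`. -/
def ManyDisjointPaths (G : SimpleGraph V) (m : ℕ) (x y : V) (N : ℕ) : Prop :=
  ∃ P : Fin N → (ℕ → V),
    (∀ a, PathSeq G m (P a) ∧ P a 0 = x ∧ P a m = y) ∧
    (∀ a b, a ≠ b → ∃ i, i ≤ m ∧ P a i ≠ P b i) ∧
    ∀ a b, a ≠ b → ∀ i j, 0 < i → i < m → 0 < j → j < m → P a i ≠ P b j

/-- A pair `(x, y)` of distinct vertices is `(i,j)`-rich (with parameters `k`, `h`, `K`, `δ`). -/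
def Rich (G : SimpleGraph V) (k h : ℕ) (K δ : ℝ) (i j : ℕ) (x y : V) : Prop :=
  x ≠ y ∧
  ((2 * (i + j) * h * (2 * k + 1) + 2 * (i + 1) * j : ℕ) : ℝ) *
      (K * δ) ^ ((i : ℤ) + (j : ℤ) - 1) <
    (Set.ncard {PQ : (ℕ → V) × (ℕ → V) |
      PathSeq G i PQ.1 ∧ PQ.1 0 = x ∧ PadSeq i PQ.1 ∧
      PathSeq G j PQ.2 ∧ PQ.2 0 = y ∧ PadSeq j PQ.2 ∧
      ManyDisjointPaths G (2 * k - i - j) (PQ.1 i) (PQ.2 j) ((h + 2) * (2 * k + 1) + 1)} : ℝ)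

/-- `(x, y)` is an `(ℓ, L)`-bad pair: there is an `L`-admissible but not `L`-good path of
length `ℓ` from `x` to `y`. -/
def Bad (G : SimpleGraph V) (L : ℝ) (ℓ : ℕ) (x y : V) : Prop :=
  ∃ p : ℕ → V, p 0 = x ∧ p ℓ = y ∧ Admissible G L ℓ p ∧ ¬ Good G L ℓ p

/-- `G` contains the `(s-1)`-subdivision of the multigraph on `Fin t` with multiplicity
function `m` as a subgraph: each parallel edge between `a < b` is replaced by a path of
length `s`, these paths being pairwise internally vertex-disjoint, with internal vertices
distinct from all branch vertices. -/
def ContainsMultiSubdiv (G : SimpleGraph V) (t : ℕ) (m : Fin t → Fin t → ℕ) (s : ℕ) : Prop :=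
  ∃ (φ : Fin t → V) (π : (a : Fin t) → (b : Fin t) → Fin (m a b) → (ℕ → V)),
    Function.Injective φ ∧
    (∀ a b, a < b → ∀ c, PathSeq G s (π a b c) ∧ π a b c 0 = φ a ∧ π a b c s = φ b) ∧
    (∀ a b, a < b → ∀ c, ∀ i, 0 < i → i < s → ∀ d, π a b c i ≠ φ d) ∧
    (∀ a b, a < b → ∀ a' b', a' < b' → ∀ (c : Fin (m a b)) (c' : Fin (m a' b')),
      (a, b, (c : ℕ)) ≠ (a', b', (c' : ℕ)) →
      ∀ i i', 0 < i → i < s → 0 < i' → i' < s → π a b c i ≠ π a' b' c' i')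

/-- The number of vertices of `H = F^{2k-1}` where `F` is the multigraph on `Fin t` with
multiplicity function `m`: the `t` branch vertices plus `2k - 1` internal vertices for each
edge (counted with multiplicity). -/
def nH (t k : ℕ) (m : Fin t → Fin t → ℕ) : ℕ :=
  t + (2 * k - 1) * ∑ p : Fin t × Fin t, if p.1 < p.2 then m p.1 p.2 else 0

/-- The minimum degree of `G`. -/
noncomputable def minDeg (G : SimpleGraph V) : ℕ :=
  sInf {d | ∃ v, (G.neighborSet v).ncard = d}

/-- The maximum degree of `G`. -/
noncomputable def maxDeg (G : SimpleGraph V) : ℕ :=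
  sSup {d | ∃ v, (G.neighborSet v).ncard = d}

/-- Adjacency in the auxiliary graph `𝒢_ℓ(v)`: the `2k+1` vertices `u 0 = v, u 1, …, u k,
u' 1, …, u' k` are all distinct and there exist `0 ≤ i, j ≤ k-1` such that the pair
`(u ℓ, u' ℓ)` is `(i,j)`-rich (symmetrised so that this defines a graph). -/
def AuxAdj (G : SimpleGraph V) (k h : ℕ) (K δ : ℝ) (ℓ : Fin (k + 1))
    (u u' : Fin (k + 1) → V) : Prop :=
  Function.Injective u ∧ Function.Injective u' ∧
  (∀ a b : Fin (k + 1), a ≠ 0 → b ≠ 0 → u a ≠ u' b) ∧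
  ∃ i j : ℕ, i < k ∧ j < k ∧
    (Rich G k h K δ i j (u ℓ) (u' ℓ) ∨ Rich G k h K δ i j (u' ℓ) (u ℓ))

/-- `r` satisfies the `k`-colour Ramsey property for `t`: every `k`-colouring of the edges of
the complete graph on `r` vertices contains a monochromatic complete graph on `t` vertices. -/
def RamseyProp (k t r : ℕ) : Prop :=
  ∀ χ : Fin r → Fin r → Fin k, (∀ a b, χ a b = χ b a) →
    ∃ (col : Fin k) (s : Finset (Fin r)), s.card = t ∧
      ∀ a ∈ s, ∀ b ∈ s, a ≠ b → χ a b = col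

/-!
Centre a pair of `k`-walks `u, u'` at a common vertex `v` and glue them back to back; the glued
`2k`-walk is poor unless some level `ℓ` makes `(u ℓ, u' ℓ)` rich. Join two walks from `v` when they
are rich at some level. This graph on walks has no `r`-clique: colouring a clique by the rich
level, Ramsey gives `t` walks whose `ℓ`-th vertices are pairwise rich, and a rich pair can be
joined by a path of length `2k` avoiding any `|V(H)|` prescribed vertices (the walks counted by
richness are too many to all hit those vertices or each other, and the many disjoint middle paths
cannot all be blocked). Greedily embedding `H` this way contradicts `H`-freeness. So Turán's
theorem leaves at least `|W_v|² / (r - 1)` non-adjacent pairs among the `k`-walks `W_v` from `v`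
ending in `S`, and Cauchy–Schwarz over `v` with `∑ |W_v| ≥ |S| δ^k` gives the bound.
-/

open Finset

namespace SimpleGraph

lemma CliqueFree.two_mul_card_edgeFinset_le {α : Type*} [Fintype α] {G : SimpleGraph α}
    [DecidableRel G.Adj] {r : ℕ} (hr : 0 < r) (hG : G.CliqueFree (r + 1)) :
    2 * r * #G.edgeFinset ≤ (r - 1) * Fintype.card α ^ 2 := by
  classical
  obtain ⟨H, _, hH⟩ := exists_isTuranMaximal (V := α) hr
  obtain ⟨e⟩ := (isTuranMaximal_iff_nonempty_iso_turanGraph hr).1 hH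
  calc 2 * r * #G.edgeFinset ≤ 2 * r * #H.edgeFinset := Nat.mul_le_mul_left _ (hH.2 hG)
    _ = 2 * r * #(turanGraph _ r).edgeFinset := by rw [e.card_edgeFinset_eq]
    _ ≤ _ := mul_card_edgeFinset_turanGraph_le

lemma CliqueFree.sq_card_le_mul_card_not_adj {α : Type*} {G : SimpleGraph α}
    [DecidableRel G.Adj] {r : ℕ} (hG : G.CliqueFree r) (F : Finset α) :
    #F ^ 2 ≤ (r - 1) * #((F ×ˢ F).filter fun p => ¬ G.Adj p.1 p.2) := by
  classical
  rcases r with _ | _ | r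
  · exact absurd hG not_cliqueFree_zero
  · have : IsEmpty α := cliqueFree_one.1 hG
    simp [F.eq_empty_of_isEmpty]
  set H := G.induce (F : Set α)
  have hH : H.CliqueFree (r + 2) := hG.comap ⟨Copy.induce G _⟩
  have hTuran := hH.two_mul_card_edgeFinset_le (by omega : 0 < r + 1)
  simp only [SetLike.coe_sort_coe, add_tsub_cancel_right, Fintype.card_coe] at hTuran
  have hadj : #((F ×ˢ F).filter fun p => G.Adj p.1 p.2) = 2 * #H.edgeFinset := by
    rw [← H.dart_card_eq_twice_card_edges, ← Finset.card_univ]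
    refine (card_bij (fun d _ => (d.fst.1, d.snd.1)) (fun d _ => ?_) (fun d _ d' _ h => ?_) ?_).symm
    · exact mem_filter.2 ⟨mem_product.2 ⟨d.fst.2, d.snd.2⟩, d.adj⟩
    · simp only [Prod.mk.injEq] at h
      exact Dart.ext _ _ (Prod.ext (Subtype.ext h.1) (Subtype.ext h.2))
    · rintro ⟨u, v⟩ huv
      obtain ⟨huv, hadj⟩ := mem_filter.1 huv
      obtain ⟨hu, hv⟩ := mem_product.1 huv
      exact ⟨⟨(⟨u, hu⟩, ⟨v, hv⟩), hadj⟩, mem_univ _, rfl⟩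
  have hsum := card_filter_add_card_filter_not (s := F ×ˢ F) fun p => G.Adj p.1 p.2
  rw [card_product, ← sq, hadj] at hsum
  simp only [Nat.add_sub_cancel]
  nlinarith

end SimpleGraph

variable {W : Type*}

def clampSeq (ℓ : ℕ) (q : Fin (ℓ + 1) → W) : ℕ → W := fun n => q ⟨min n ℓ, by omega⟩

lemma padSeq_clampSeq (ℓ : ℕ) (q : Fin (ℓ + 1) → W) : PadSeq ℓ (clampSeq ℓ q) := by
  intro n hn
  simp [clampSeq, Nat.min_eq_right hn]

lemma clampSeq_restrict {ℓ : ℕ} {p : ℕ → W} (hp : PadSeq ℓ p) :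
    clampSeq ℓ (fun a => p a) = p := by
  funext n
  rcases le_total n ℓ with h | h
  · simp [clampSeq, Nat.min_eq_left h]
  · simp [clampSeq, Nat.min_eq_right h, hp n h]

lemma PadSeq.ext {ℓ : ℕ} {p q : ℕ → W} (hp : PadSeq ℓ p) (hq : PadSeq ℓ q)
    (h : ∀ n, n ≤ ℓ → p n = q n) : p = q := by
  funext n
  rcases le_total n ℓ with hn | hn
  · exact h n hn
  · rw [hp n hn, hq n hn, h ℓ le_rfl]

def IsWalkSeq (G : SimpleGraph W) (ℓ : ℕ) (p : ℕ → W) : Prop :=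
  ∀ n, n < ℓ → G.Adj (p n) (p (n + 1))

def revSeq (ℓ : ℕ) (p : ℕ → W) : ℕ → W := fun n => p (ℓ - n)

lemma padSeq_revSeq (ℓ : ℕ) (p : ℕ → W) : PadSeq ℓ (revSeq ℓ p) := by
  intro n hn
  simp [revSeq, Nat.sub_eq_zero_of_le hn]

lemma revSeq_revSeq {ℓ : ℕ} {p : ℕ → W} (hp : PadSeq ℓ p) : revSeq ℓ (revSeq ℓ p) = p :=
  PadSeq.ext (padSeq_revSeq ℓ _) hp fun n hn => by simp [revSeq, Nat.sub_sub_self hn]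

lemma IsWalkSeq.rev {G : SimpleGraph W} {ℓ : ℕ} {p : ℕ → W} (hp : IsWalkSeq G ℓ p) :
    IsWalkSeq G ℓ (revSeq ℓ p) := by
  intro n hn
  have h := (hp (ℓ - (n + 1)) (by omega)).symm
  rwa [show ℓ - (n + 1) + 1 = ℓ - n by omega] at h

lemma PathSeq.rev {G : SimpleGraph W} {ℓ : ℕ} {p : ℕ → W} (hp : PathSeq G ℓ p) :
    PathSeq G ℓ (revSeq ℓ p) :=
  ⟨IsWalkSeq.rev hp.1, fun a b hab hb => (hp.2 (ℓ - b) (ℓ - a) (by omega) (by omega)).symm⟩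

lemma minDeg_le_ncard_neighborSet (G : SimpleGraph W) (v : W) :
    minDeg G ≤ (G.neighborSet v).ncard :=
  Nat.sInf_le ⟨v, rfl⟩

lemma ncard_neighborSet_le_maxDeg [Finite W] (G : SimpleGraph W) (v : W) :
    (G.neighborSet v).ncard ≤ maxDeg G :=
  le_csSup ⟨Nat.card W, by rintro d ⟨w, rfl⟩; exact Set.ncard_le_card _⟩ ⟨v, rfl⟩

def appendSeq (a : ℕ) (p q : ℕ → W) : ℕ → W := fun n => if n ≤ a then p n else q (n - a)

lemma appendSeq_of_le {a n : ℕ} (p q : ℕ → W) (h : n ≤ a) : appendSeq a p q n = p n := if_pos h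

lemma appendSeq_add {a : ℕ} {p q : ℕ → W} (hpq : p a = q 0) (n : ℕ) :
    appendSeq a p q (a + n) = q n := by
  rcases n with _ | n
  · simpa [appendSeq] using hpq
  · simp [appendSeq]

lemma IsWalkSeq.append {G : SimpleGraph W} {a b : ℕ} {p q : ℕ → W} (hp : IsWalkSeq G a p)
    (hq : IsWalkSeq G b q) (hpq : p a = q 0) : IsWalkSeq G (a + b) (appendSeq a p q) := by
  intro n hn
  rcases Nat.lt_or_ge n a with h | h
  · rw [appendSeq_of_le _ _ h.le, appendSeq_of_le _ _ h]
    exact hp n h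
  · obtain ⟨m, rfl⟩ := Nat.exists_eq_add_of_le h
    rw [appendSeq_add hpq, add_assoc, appendSeq_add hpq]
    exact hq m (by omega)

lemma PathSeq.append {G : SimpleGraph W} {a b : ℕ} {p q : ℕ → W} (hp : PathSeq G a p)
    (hq : PathSeq G b q) (hpq : p a = q 0)
    (hdisj : ∀ s s', s ≤ a → 0 < s' → s' ≤ b → p s ≠ q s') :
    PathSeq G (a + b) (appendSeq a p q) := by
  refine ⟨IsWalkSeq.append hp.1 hq.1 hpq, fun n₁ n₂ hlt hle => ?_⟩
  rcases le_or_gt n₂ a with h₂ | h₂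
  · rw [appendSeq_of_le _ _ h₂, appendSeq_of_le _ _ (by omega)]
    exact hp.2 n₁ n₂ hlt h₂
  obtain ⟨m₂, rfl⟩ := Nat.exists_eq_add_of_le h₂.le
  rw [appendSeq_add hpq]
  rcases le_or_gt n₁ a with h₁ | h₁
  · rw [appendSeq_of_le _ _ h₁]
    exact hdisj n₁ m₂ h₁ (by omega) (by omega)
  · obtain ⟨m₁, rfl⟩ := Nat.exists_eq_add_of_le h₁.le
    rw [appendSeq_add hpq]
    exact hq.2 m₁ m₂ (by omega) (by omega)

/-- `P`, then `R`, then `Q` backwards: a path as soon as the three pieces only meet where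
they are glued. -/
lemma PathSeq.exists_join_avoiding {G : SimpleGraph W} {i μ j : ℕ} {P R Q : ℕ → W} {B : Finset W}
    (hP : PathSeq G i P) (hR : PathSeq G μ R) (hQ : PathSeq G j Q) (hR0 : P i = R 0)
    (hRμ : R μ = Q j) (hPQ : ∀ s s', s ≤ i → s' ≤ j → P s ≠ Q s')
    (hPB : ∀ s, 0 < s → s ≤ i → P s ∉ B) (hQB : ∀ s, 0 < s → s ≤ j → Q s ∉ B)
    (hRB : ∀ n, 0 < n → n < μ → R n ∉ B) (hRP : ∀ n, 0 < n → n < μ → ∀ s, s ≤ i → R n ≠ P s)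
    (hRQ : ∀ n, 0 < n → n < μ → ∀ s, s ≤ j → R n ≠ Q s) :
    ∃ w : ℕ → W, PathSeq G (i + μ + j) w ∧ w 0 = P 0 ∧ w (i + μ + j) = Q 0 ∧
      ∀ n, 0 < n → n < i + μ + j → w n ∉ B := by
  have hglue : appendSeq i P R (i + μ) = revSeq j Q 0 := by simp [appendSeq_add hR0, hRμ, revSeq]
  have hPR := PathSeq.append hP hR hR0 fun s n hs h0 hn => by
    rcases Nat.lt_or_ge n μ with hnμ | hnμ
    · exact (hRP n h0 hnμ s hs).symm
    · rw [show n = μ by omega, hRμ]; exact hPQ s j hs le_rfl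
  have hPRQ := PathSeq.append hPR (PathSeq.rev hQ) hglue fun s n hs h0 hn => by
    simp only [revSeq]
    rcases le_or_gt s i with hsi | hsi
    · rw [appendSeq_of_le _ _ hsi]; exact hPQ s (j - n) hsi (by omega)
    obtain ⟨m, rfl⟩ := Nat.exists_eq_add_of_le hsi.le
    rw [appendSeq_add hR0]
    rcases Nat.lt_or_ge m μ with hmμ | hmμ
    · exact hRQ m (by omega) hmμ (j - n) (by omega)
    · rw [show m = μ by omega, hRμ]; exact (hQ.2 (j - n) j (by omega) le_rfl).symm
  refine ⟨_, hPRQ, by simp [appendSeq], by simp [appendSeq_add hglue, revSeq], fun n h0 hn => ?_⟩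
  rcases le_or_gt n (i + μ) with hn₁ | hn₁
  · rw [appendSeq_of_le _ _ hn₁]
    rcases le_or_gt n i with hn₂ | hn₂
    · rw [appendSeq_of_le _ _ hn₂]; exact hPB n h0 hn₂
    obtain ⟨m, rfl⟩ := Nat.exists_eq_add_of_le hn₂.le
    rw [appendSeq_add hR0]
    rcases Nat.lt_or_ge m μ with hmμ | hmμ
    · exact hRB m (by omega) hmμ
    · rw [show m = μ by omega, hRμ]; exact hQB j (by omega) le_rfl
  · obtain ⟨m, rfl⟩ := Nat.exists_eq_add_of_le hn₁.le
    rw [appendSeq_add hglue]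
    exact hQB (j - m) (by omega) (by omega)

def RobustlyJoined (G : SimpleGraph W) (s N : ℕ) (u v : W) : Prop :=
  ∀ B : Finset W, #B ≤ N →
    ∃ w : ℕ → W, PathSeq G s w ∧ w 0 = u ∧ w s = v ∧ ∀ n, 0 < n → n < s → w n ∉ B

lemma RobustlyJoined.symm {G : SimpleGraph W} {s N : ℕ} {u v : W} (h : RobustlyJoined G s N u v) :
    RobustlyJoined G s N v u := by
  intro B hB
  obtain ⟨w, hw, hw0, hws, hwB⟩ := h B hB
  exact ⟨revSeq s w, PathSeq.rev hw, by simpa [revSeq], by simpa [revSeq],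
    fun n hn hns => hwB (s - n) (by omega) (by omega)⟩

lemma ManyDisjointPaths.exists_avoiding {G : SimpleGraph W} {μ N : ℕ} {x y : W}
    (h : ManyDisjointPaths G μ x y N) (C : Finset W) (hC : #C < N) :
    ∃ R : ℕ → W, PathSeq G μ R ∧ R 0 = x ∧ R μ = y ∧ ∀ n, 0 < n → n < μ → R n ∉ C := by
  obtain ⟨P, hP, -, hdisj⟩ := h
  by_contra! hno
  choose f hf0 hfμ hfC using fun a => hno (P a) (hP a).1 (hP a).2.1 (hP a).2.2
  have hinj : Set.InjOn (fun a => P a (f a)) (univ : Finset (Fin N)) := by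
    intro a _ b _ hab
    by_contra hne
    exact hdisj a b hne _ _ (hf0 a) (hfμ a) (hf0 b) (hfμ b) hab
  have := card_le_card_of_injOn _ (fun a _ => hfC a) hinj
  simp at this
  omega

section Counting

variable [Fintype W] (G : SimpleGraph W)

open Classical in
noncomputable def paddedSeqs (ℓ : ℕ) : Finset (ℕ → W) := univ.image (clampSeq ℓ)

variable {G} in
lemma mem_paddedSeqs {ℓ : ℕ} {p : ℕ → W} : p ∈ paddedSeqs ℓ ↔ PadSeq ℓ p := by
  classical
  refine ⟨?_, fun hp => mem_image.2 ⟨_, mem_univ _, clampSeq_restrict hp⟩⟩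
  rintro hp
  obtain ⟨q, -, rfl⟩ := mem_image.1 hp
  exact padSeq_clampSeq ℓ q

open Classical in
noncomputable def walksFrom (ℓ : ℕ) (x : W) : Finset (ℕ → W) :=
  (paddedSeqs ℓ).filter fun p => IsWalkSeq G ℓ p ∧ p 0 = x

variable {G} in
lemma mem_walksFrom {ℓ : ℕ} {x : W} {p : ℕ → W} :
    p ∈ walksFrom G ℓ x ↔ PadSeq ℓ p ∧ IsWalkSeq G ℓ p ∧ p 0 = x := by
  simp [walksFrom, mem_paddedSeqs]

lemma card_walksFrom_succ (ℓ : ℕ) (x : W) :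
    #(walksFrom G (ℓ + 1) x) = ∑ p ∈ walksFrom G ℓ x, (G.neighborSet (p ℓ)).ncard := by
  classical
  rw [card_eq_sum_card_fiberwise (f := fun p n => p (min n ℓ)) (t := walksFrom G ℓ x)]
  · refine sum_congr rfl fun p hp => ?_
    obtain ⟨hpad, -, -⟩ := mem_walksFrom.1 hp
    rw [← G.coe_neighborFinset, Set.ncard_coe_finset]
    refine card_nbij' (fun p' => p' (ℓ + 1)) (fun z n => if n ≤ ℓ then p n else z) ?_ ?_ ?_ ?_
    · intro p' hp'
      obtain ⟨hq, rfl⟩ := mem_filter.1 (mem_coe.1 hp')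
      obtain ⟨-, hw, -⟩ := mem_walksFrom.1 hq
      simpa using hw ℓ (by omega)
    · intro z hz
      have hz : G.Adj (p ℓ) z := by simpa using hz
      obtain ⟨-, hw, h0⟩ := mem_walksFrom.1 hp
      refine mem_filter.2 ⟨mem_walksFrom.2 ⟨fun n hn => ?_, fun n hn => ?_, by simpa using h0⟩, ?_⟩
      · simp [show ¬ n ≤ ℓ by omega]
      · rcases Nat.lt_or_ge n ℓ with h | h
        · simpa [h.le, show n + 1 ≤ ℓ by omega] using hw n h
        · simpa [show n = ℓ by omega] using hz
      · funext n
        rcases le_total n ℓ with h | h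
        · simp [h]
        · simp [Nat.min_eq_right h, hpad n h]
    · intro p' hp'
      obtain ⟨hq, rfl⟩ := mem_filter.1 (mem_coe.1 hp')
      obtain ⟨hpad', -, -⟩ := mem_walksFrom.1 hq
      funext n
      by_cases hn : n ≤ ℓ
      · simp [hn]
      · simp [hn, hpad' n (by omega)]
    · intro z _
      simp
  · intro p' hp'
    obtain ⟨hpad, hw, h0⟩ := mem_walksFrom.1 hp'
    refine mem_walksFrom.2
      ⟨fun n hn => by simp [Nat.min_eq_right hn], fun n hn => ?_, by simpa using h0⟩
    simpa [Nat.min_eq_left hn.le, Nat.min_eq_left (show n + 1 ≤ ℓ by omega)] using hw n (by omega)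

lemma pow_minDeg_le_card_walksFrom (ℓ : ℕ) (x : W) : minDeg G ^ ℓ ≤ #(walksFrom G ℓ x) := by
  induction ℓ with
  | zero =>
    refine one_le_card.2 ⟨fun _ => x, mem_walksFrom.2 ⟨fun _ _ => rfl, fun n hn => ?_, rfl⟩⟩
    omega
  | succ ℓ ih =>
    rw [card_walksFrom_succ, pow_succ]
    calc minDeg G ^ ℓ * minDeg G ≤ #(walksFrom G ℓ x) * minDeg G := Nat.mul_le_mul_right _ ih
      _ ≤ _ := by
        rw [← smul_eq_mul]
        exact card_nsmul_le_sum _ _ _ fun p _ => minDeg_le_ncard_neighborSet G _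

lemma card_walksFrom_le_pow_maxDeg (ℓ : ℕ) (x : W) : #(walksFrom G ℓ x) ≤ maxDeg G ^ ℓ := by
  induction ℓ with
  | zero =>
    refine card_le_one.2 fun p hp q hq => ?_
    obtain ⟨hpad, -, rfl⟩ := mem_walksFrom.1 hp
    obtain ⟨hqad, -, h⟩ := mem_walksFrom.1 hq
    exact PadSeq.ext hpad hqad fun n hn => by rw [Nat.le_zero.1 hn, h]
  | succ ℓ ih =>
    rw [card_walksFrom_succ, pow_succ]
    calc _ ≤ #(walksFrom G ℓ x) * maxDeg G := by
          rw [← smul_eq_mul]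
          exact sum_le_card_nsmul _ _ _ fun p _ => ncard_neighborSet_le_maxDeg G _
      _ ≤ _ := Nat.mul_le_mul_right _ ih

/-- Splitting at the pinned position `s` leaves two free walks of total length `ℓ - 1`. -/
lemma card_walksFrom_filter_eq_le [DecidableEq W] {ℓ s : ℕ} (hs : 1 ≤ s) (hsℓ : s ≤ ℓ) (x z : W) :
    #((walksFrom G ℓ x).filter fun p => p s = z) ≤ maxDeg G ^ (ℓ - 1) := by
  calc _ ≤ #(walksFrom G (s - 1) x ×ˢ walksFrom G (ℓ - s) z) := by
        refine card_le_card_of_injOn (fun p => (fun n => p (min n (s - 1)), fun n => p (s + n)))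
          (fun p hp => ?_) (fun p hp q hq hpq => ?_)
        · obtain ⟨hpx, rfl⟩ := mem_filter.1 (mem_coe.1 hp)
          obtain ⟨hpad, hw, h0⟩ := mem_walksFrom.1 hpx
          refine mem_coe.2 (mem_product.2 ⟨mem_walksFrom.2 ⟨fun n hn => ?_, fun n hn => ?_, ?_⟩,
            mem_walksFrom.2 ⟨fun n hn => ?_, fun n hn => ?_, by simp⟩⟩)
          · simp [Nat.min_eq_right hn]
          · simpa [Nat.min_eq_left hn.le, show min (n + 1) (s - 1) = n + 1 by omega]
              using hw n (by omega)
          · simpa using h0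
          · simp only
            rw [hpad _ (by omega), Nat.add_sub_cancel' hsℓ]
          · simpa [add_assoc] using hw (s + n) (by omega)
        · obtain ⟨hp, -⟩ := mem_filter.1 (mem_coe.1 hp)
          obtain ⟨hq, -⟩ := mem_filter.1 (mem_coe.1 hq)
          simp only [Prod.mk.injEq, funext_iff] at hpq
          refine PadSeq.ext (mem_walksFrom.1 hp).1 (mem_walksFrom.1 hq).1 fun n _ => ?_
          rcases Nat.lt_or_ge n s with h | h
          · simpa [show min n (s - 1) = n by omega] using hpq.1 n
          · simpa [Nat.add_sub_cancel' h] using hpq.2 (n - s)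
    _ ≤ maxDeg G ^ (s - 1) * maxDeg G ^ (ℓ - s) := by
        rw [card_product]
        exact Nat.mul_le_mul (card_walksFrom_le_pow_maxDeg G _ x)
          (card_walksFrom_le_pow_maxDeg G _ z)
    _ = maxDeg G ^ (ℓ - 1) := by rw [← pow_add]; congr 1; omega

lemma card_walksFrom_filter_eq_comm [DecidableEq W] (ℓ : ℕ) (x y : W) :
    #((walksFrom G ℓ x).filter fun p => p ℓ = y) =
      #((walksFrom G ℓ y).filter fun p => p ℓ = x) := by
  have key : ∀ x y : W, ∀ p ∈ (walksFrom G ℓ x).filter (fun p => p ℓ = y),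
      revSeq ℓ p ∈ (walksFrom G ℓ y).filter (fun p => p ℓ = x) := by
    intro x y p hp
    obtain ⟨hp, hℓ⟩ := mem_filter.1 hp
    obtain ⟨-, hw, h0⟩ := mem_walksFrom.1 hp
    exact mem_filter.2 ⟨mem_walksFrom.2 ⟨padSeq_revSeq ℓ p, hw.rev, by simpa [revSeq]⟩,
      by simpa [revSeq]⟩
  refine card_nbij' (revSeq ℓ) (revSeq ℓ) (key x y) (key y x) (fun p hp => ?_) (fun p hp => ?_)
  · exact revSeq_revSeq (mem_walksFrom.1 (mem_filter.1 (mem_coe.1 hp)).1).1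
  · exact revSeq_revSeq (mem_walksFrom.1 (mem_filter.1 (mem_coe.1 hp)).1).1

lemma card_walksFrom_filter_hits_le [DecidableEq W] (ℓ : ℕ) (x : W) (B : Finset W) :
    #((walksFrom G ℓ x).filter fun p => ∃ s ∈ Icc 1 ℓ, p s ∈ B) ≤ #B * ℓ * maxDeg G ^ (ℓ - 1) := by
  classical
  calc _ ≤ #((Icc 1 ℓ ×ˢ B).biUnion fun sz => (walksFrom G ℓ x).filter fun p => p sz.1 = sz.2) := by
        refine card_le_card fun p hp => ?_
        obtain ⟨hp, s, hs, hsB⟩ := mem_filter.1 hp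
        exact mem_biUnion.2 ⟨(s, p s), mem_product.2 ⟨hs, hsB⟩, mem_filter.2 ⟨hp, rfl⟩⟩
    _ ≤ ∑ sz ∈ Icc 1 ℓ ×ˢ B, maxDeg G ^ (ℓ - 1) := by
        refine card_biUnion_le.trans (sum_le_sum fun sz hsz => ?_)
        obtain ⟨hs, -⟩ := mem_product.1 hsz
        obtain ⟨hs1, hsℓ⟩ := mem_Icc.1 hs
        exact card_walksFrom_filter_eq_le G hs1 hsℓ x sz.2
    _ = #B * ℓ * maxDeg G ^ (ℓ - 1) := by
        rw [sum_const, card_product, Nat.card_Icc, Nat.add_sub_cancel, smul_eq_mul]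
        ring

private lemma mul_pow_pred_mul_pow (i j d : ℕ) :
    i * (d ^ (i - 1) * d ^ j) = i * d ^ (i + j - 1) := by
  rcases i with _ | i
  · simp
  · rw [← pow_add]; congr 2; omega

lemma card_filter_fst_hits_le [DecidableEq W] (i j : ℕ) (x y : W) (B : Finset W) :
    #((walksFrom G i x ×ˢ walksFrom G j y).filter fun PQ => ∃ s ∈ Icc 1 i, PQ.1 s ∈ B) ≤
      #B * i * maxDeg G ^ (i + j - 1) := by
  rw [filter_product_left (fun P : ℕ → W => ∃ s ∈ Icc (1 : ℕ) i, P s ∈ B), card_product]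
  calc _ ≤ #B * i * maxDeg G ^ (i - 1) * maxDeg G ^ j := Nat.mul_le_mul
        (card_walksFrom_filter_hits_le G i x B) (card_walksFrom_le_pow_maxDeg G j y)
    _ = #B * (i * (maxDeg G ^ (i - 1) * maxDeg G ^ j)) := by ring
    _ = #B * i * maxDeg G ^ (i + j - 1) := by rw [mul_pow_pred_mul_pow, mul_assoc]

lemma card_filter_snd_hits_le [DecidableEq W] (i j : ℕ) (x y : W) (B : Finset W) :
    #((walksFrom G i x ×ˢ walksFrom G j y).filter fun PQ => ∃ s ∈ Icc 1 j, PQ.2 s ∈ B) ≤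
      #B * j * maxDeg G ^ (i + j - 1) := by
  rw [filter_product_right (fun Q : ℕ → W => ∃ s ∈ Icc (1 : ℕ) j, Q s ∈ B), card_product]
  calc _ ≤ maxDeg G ^ i * (#B * j * maxDeg G ^ (j - 1)) := Nat.mul_le_mul
        (card_walksFrom_le_pow_maxDeg G i x) (card_walksFrom_filter_hits_le G j y B)
    _ = #B * (j * (maxDeg G ^ (j - 1) * maxDeg G ^ i)) := by ring
    _ = #B * j * maxDeg G ^ (i + j - 1) := by rw [mul_pow_pred_mul_pow, add_comm j i, mul_assoc]

lemma card_filter_snd_meets_fst_le [DecidableEq W] (i j : ℕ) (x y : W) :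
    #((walksFrom G i x ×ˢ walksFrom G j y).filter fun PQ =>
      ∃ s ∈ Icc 1 j, PQ.2 s ∈ (range (i + 1)).image PQ.1) ≤
        (i + 1) * j * maxDeg G ^ (i + j - 1) := by
  classical
  rw [card_eq_sum_card_fiberwise (f := Prod.fst) (t := walksFrom G i x)
    fun PQ hPQ => (mem_product.1 (mem_filter.1 hPQ).1).1]
  calc _ ≤ ∑ P ∈ walksFrom G i x, (i + 1) * j * maxDeg G ^ (j - 1) := by
        refine sum_le_sum fun P _ => ?_
        calc _ ≤ #((walksFrom G j y).filter fun Q =>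
              ∃ s ∈ Icc 1 j, Q s ∈ (range (i + 1)).image P) := by
              refine card_le_card_of_injOn Prod.snd (fun PQ hPQ => ?_) fun PQ hPQ PQ' hPQ' h =>
                Prod.ext ((mem_filter.1 hPQ).2.trans (mem_filter.1 hPQ').2.symm) h
              obtain ⟨hbad, rfl⟩ := mem_filter.1 (mem_coe.1 hPQ)
              obtain ⟨hmem, hcr⟩ := mem_filter.1 hbad
              exact mem_filter.2 ⟨(mem_product.1 hmem).2, hcr⟩
          _ ≤ _ := (card_walksFrom_filter_hits_le G j y _).trans <| by
              gcongr
              exact card_image_le.trans (card_range _).le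
    _ ≤ maxDeg G ^ i * ((i + 1) * j * maxDeg G ^ (j - 1)) := by
        rw [sum_const, smul_eq_mul]
        exact Nat.mul_le_mul_right _ (card_walksFrom_le_pow_maxDeg G i x)
    _ = (i + 1) * (j * (maxDeg G ^ (j - 1) * maxDeg G ^ i)) := by ring
    _ = (i + 1) * j * maxDeg G ^ (i + j - 1) := by
        rw [mul_pow_pred_mul_pow, add_comm j i, mul_assoc]

lemma card_badPairs_le [DecidableEq W] (i j : ℕ) (x y : W) (B : Finset W) :
    #((walksFrom G i x ×ˢ walksFrom G j y).filter fun PQ =>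
        (∃ s ∈ Icc 1 i, PQ.1 s ∈ B) ∨ (∃ s ∈ Icc 1 j, PQ.2 s ∈ B) ∨
          ∃ s ∈ Icc 1 j, PQ.2 s ∈ (range (i + 1)).image PQ.1) ≤
      (#B * (i + j) + (i + 1) * j) * maxDeg G ^ (i + j - 1) := by
  classical
  calc _ ≤ #((walksFrom G i x ×ˢ walksFrom G j y).filter fun PQ => ∃ s ∈ Icc 1 i, PQ.1 s ∈ B) +
        #((walksFrom G i x ×ˢ walksFrom G j y).filter fun PQ => ∃ s ∈ Icc 1 j, PQ.2 s ∈ B) +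
        #((walksFrom G i x ×ˢ walksFrom G j y).filter fun PQ =>
          ∃ s ∈ Icc 1 j, PQ.2 s ∈ (range (i + 1)).image PQ.1) := by
        refine (card_le_card fun PQ hPQ => ?_).trans
          ((card_union_le _ _).trans (Nat.add_le_add_right (card_union_le _ _) _))
        obtain ⟨hmem, h1 | h2 | h3⟩ := mem_filter.1 hPQ
        · exact mem_union_left _ (mem_union_left _ (mem_filter.2 ⟨hmem, h1⟩))
        · exact mem_union_left _ (mem_union_right _ (mem_filter.2 ⟨hmem, h2⟩))
        · exact mem_union_right _ (mem_filter.2 ⟨hmem, h3⟩)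
    _ ≤ #B * i * maxDeg G ^ (i + j - 1) + #B * j * maxDeg G ^ (i + j - 1) +
        (i + 1) * j * maxDeg G ^ (i + j - 1) := by
        gcongr
        · exact card_filter_fst_hits_le G i j x y B
        · exact card_filter_snd_hits_le G i j x y B
        · exact card_filter_snd_meets_fst_le G i j x y
    _ = _ := by ring

end Counting

lemma le_richThreshold {N d h i j k : ℕ} {K δ : ℝ}
    (hN : N ≤ ((h + 1) * (i + j) + (i + 1) * j) * d ^ (i + j - 1)) (hd : (d : ℝ) ≤ K * δ)
    (hh : 1 ≤ h) (hk : 1 ≤ k) :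
    (N : ℝ) ≤ ((2 * (i + j) * h * (2 * k + 1) + 2 * (i + 1) * j : ℕ) : ℝ) *
      (K * δ) ^ ((i : ℤ) + (j : ℤ) - 1) := by
  rcases Nat.eq_zero_or_pos (i + j) with hij | hij
  · obtain ⟨rfl, rfl⟩ : i = 0 ∧ j = 0 := by omega
    simp_all
  have hcoef :
      (h + 1) * (i + j) + (i + 1) * j ≤ 2 * (i + j) * h * (2 * k + 1) + 2 * (i + 1) * j := by
    have : h + 1 ≤ 2 * h * (2 * k + 1) := by nlinarith
    nlinarith [Nat.mul_le_mul_right (i + j) this]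
  rw [show (i : ℤ) + j - 1 = ((i + j - 1 : ℕ) : ℤ) by omega, zpow_natCast]
  calc (N : ℝ) ≤ (((h + 1) * (i + j) + (i + 1) * j : ℕ) : ℝ) * (d : ℝ) ^ (i + j - 1) := by
        exact_mod_cast hN
    _ ≤ _ := by gcongr

section RichPairs

variable [Fintype W] [DecidableEq W] {G : SimpleGraph W} {k h i j : ℕ} {K δ : ℝ} {x y : W}

/-- Since the rich pairs outnumber the pairs of walks that hit `B` or meet each other, one rich
pair is clean. -/
lemma Rich.exists_clean_pair (hrich : Rich G k h K δ i j x y) (hmax : (maxDeg G : ℝ) ≤ K * δ)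
    (hh : 1 ≤ h) (hk : 1 ≤ k) (B : Finset W) (hB : #B ≤ h) :
    ∃ P Q : ℕ → W, PathSeq G i P ∧ P 0 = x ∧ PathSeq G j Q ∧ Q 0 = y ∧
      ManyDisjointPaths G (2 * k - i - j) (P i) (Q j) ((h + 2) * (2 * k + 1) + 1) ∧
      (∀ s, 0 < s → s ≤ i → P s ∉ B) ∧ (∀ s, 0 < s → s ≤ j → Q s ∉ B) ∧
      ∀ s s', s ≤ i → s' ≤ j → P s ≠ Q s' := by
  obtain ⟨hxy, hcount⟩ := hrich
  by_contra! hno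
  set bad := (walksFrom G i x ×ˢ walksFrom G j y).filter fun PQ =>
    (∃ s ∈ Icc 1 i, PQ.1 s ∈ insert y B) ∨ (∃ s ∈ Icc 1 j, PQ.2 s ∈ insert y B) ∨
      ∃ s ∈ Icc 1 j, PQ.2 s ∈ (range (i + 1)).image PQ.1
  have hyB : #(insert y B) ≤ h + 1 := (card_insert_le _ _).trans (by omega)
  refine absurd hcount (not_lt.2 ?_)
  calc _ ≤ (#bad : ℝ) := by
        rw [← Set.ncard_coe_finset]
        refine Nat.cast_le.2 (Set.ncard_le_ncard ?_ (finite_toSet bad))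
        rintro ⟨P, Q⟩ ⟨hP, hP0, hPpad, hQ, hQ0, hQpad, hmany⟩
        refine mem_filter.2 ⟨mem_product.2 ⟨mem_walksFrom.2 ⟨hPpad, hP.1, hP0⟩,
          mem_walksFrom.2 ⟨hQpad, hQ.1, hQ0⟩⟩, ?_⟩
        by_contra! hclean
        obtain ⟨hPB, hQB, hPQ⟩ := hclean
        simp only [mem_Icc, mem_insert, not_or, mem_image, mem_range, not_exists, not_and]
          at hPB hQB hPQ
        obtain ⟨s, s', hs, hs', heq⟩ := hno P Q hP hP0 hQ hQ0 hmany
          (fun s h0 hs => (hPB s ⟨h0, hs⟩).2) (fun s h0 hs => (hQB s ⟨h0, hs⟩).2)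
        rcases Nat.eq_zero_or_pos s' with rfl | h0
        · rcases Nat.eq_zero_or_pos s with rfl | h0'
          · exact hxy (hP0 ▸ hQ0 ▸ heq)
          · exact (hPB s ⟨h0', hs⟩).1 (heq.trans hQ0)
        · exact hPQ s' ⟨h0, hs'⟩ s (by omega) heq
    _ ≤ _ := le_richThreshold ((card_badPairs_le G i j x y (insert y B)).trans (by gcongr))
        hmax hh hk

/-- The path is a clean rich pair `P`, `Q` closed up by one of the many disjoint `P i`–`Q j`
paths that avoids `B`, `P` and `Q`. -/
lemma Rich.robustlyJoined (hrich : Rich G k h K δ i j x y) (hmax : (maxDeg G : ℝ) ≤ K * δ)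
    (hh : 1 ≤ h) (hi : i < k) (hj : j < k) : RobustlyJoined G (2 * k) h x y := by
  intro B hB
  obtain ⟨P, Q, hP, hP0, hQ, hQ0, hmany, hPB, hQB, hPQ⟩ :=
    Rich.exists_clean_pair hrich hmax hh (by omega) B hB
  set C := B ∪ (range (i + 1)).image P ∪ (range (j + 1)).image Q
  have hC : #C < (h + 2) * (2 * k + 1) + 1 := by
    have : #C ≤ h + (i + 1) + (j + 1) := by
      grw [card_union_le, card_union_le, card_image_le, card_image_le, card_range, card_range, hB]
    nlinarith
  obtain ⟨R, hR, hR0, hRμ, hRC⟩ := ManyDisjointPaths.exists_avoiding hmany C hC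
  have hRC' : ∀ n, 0 < n → n < 2 * k - i - j →
      R n ∉ B ∧ (∀ s, s ≤ i → R n ≠ P s) ∧ ∀ s, s ≤ j → R n ≠ Q s := by
    intro n h0 hn
    have := hRC n h0 hn
    simp only [C, mem_union, mem_image, mem_range, not_or, not_exists, not_and] at this
    exact ⟨this.1.1, fun s hs h => this.1.2 s (by omega) h.symm,
      fun s hs h => this.2 s (by omega) h.symm⟩
  obtain ⟨w, hw, hw0, hwk, hwB⟩ := PathSeq.exists_join_avoiding hP hR hQ hR0.symm hRμ hPQ hPB hQB
    (fun n h0 hn => (hRC' n h0 hn).1) (fun n h0 hn => (hRC' n h0 hn).2.1)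
    (fun n h0 hn => (hRC' n h0 hn).2.2)
  rw [show i + (2 * k - i - j) + j = 2 * k by omega] at hw hwk hwB
  exact ⟨w, hw, hw0.trans hP0, hwk.trans hQ0, hwB⟩

end RichPairs

section Subdivision

variable [DecidableEq W] {G : SimpleGraph W}

/-- Greedy embedding: each new path only has to avoid `X` and the interiors of the earlier ones. -/
lemma exists_internallyDisjoint_paths {ι : Type*} [DecidableEq ι] {s N : ℕ} (u v : ι → W)
    (X : Finset W) (J : Finset ι) (hjoin : ∀ τ ∈ J, RobustlyJoined G s N (u τ) (v τ))
    (hN : #X + (s - 1) * #J ≤ N) :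
    ∃ π : ι → ℕ → W,
      (∀ τ ∈ J, PathSeq G s (π τ) ∧ π τ 0 = u τ ∧ π τ s = v τ ∧
        ∀ n, 0 < n → n < s → π τ n ∉ X) ∧
      ∀ τ ∈ J, ∀ τ' ∈ J, τ ≠ τ' → ∀ n n', 0 < n → n < s → 0 < n' → n' < s → π τ n ≠ π τ' n' := by
  induction J using Finset.induction_on with
  | empty => exact ⟨fun τ _ => u τ, by simp, by simp⟩
  | insert τ₀ J hτ₀ ih =>
    rw [card_insert_of_notMem hτ₀] at hN
    obtain ⟨π, hπ, hdisj⟩ := ih (fun τ hτ => hjoin τ (mem_insert_of_mem hτ)) (by nlinarith)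
    set B := X ∪ J.biUnion fun τ => (Ioo 0 s).image (π τ)
    have hB : #B ≤ N := by
      have : #(J.biUnion fun τ => (Ioo 0 s).image (π τ)) ≤ #J * (s - 1) :=
        card_biUnion_le_card_mul _ _ _ fun τ _ => card_image_le.trans (by simp)
      grw [card_union_le, this]
      nlinarith
    have hmemB : ∀ τ ∈ J, ∀ n, 0 < n → n < s → π τ n ∈ B := fun τ hτ n h0 hn =>
      mem_union_right _ (mem_biUnion.2 ⟨τ, hτ, mem_image.2 ⟨n, mem_Ioo.2 ⟨h0, hn⟩, rfl⟩⟩)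
    obtain ⟨w, hw, hw0, hws, hwB⟩ := hjoin τ₀ (mem_insert_self _ _) B hB
    have hupd : ∀ τ ∈ J, Function.update π τ₀ w τ = π τ := fun τ hτ =>
      Function.update_of_ne (by rintro rfl; exact hτ₀ hτ) _ _
    refine ⟨Function.update π τ₀ w, fun τ hτ => ?_, fun τ hτ τ' hτ' hne n n' h0 hn h0' hn' => ?_⟩
    · rcases mem_insert.1 hτ with rfl | hτ
      · rw [Function.update_self]
        exact ⟨hw, hw0, hws, fun n h0 hn hX => hwB n h0 hn (mem_union_left _ hX)⟩
      · rw [hupd τ hτ]; exact hπ τ hτ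
    rcases mem_insert.1 hτ with rfl | hτJ <;> rcases mem_insert.1 hτ' with rfl | hτ'J
    · exact absurd rfl hne
    · rw [Function.update_self, hupd τ' hτ'J]
      exact fun h => hwB n h0 hn (h ▸ hmemB τ' hτ'J n' h0' hn')
    · rw [Function.update_self, hupd τ hτJ]
      exact fun h => hwB n' h0' hn' (h ▸ hmemB τ hτJ n h0 hn)
    · rw [hupd τ hτJ, hupd τ' hτ'J]
      exact hdisj τ hτJ τ' hτ'J hne n n' h0 hn h0' hn'

lemma containsMultiSubdiv_of_robustlyJoined {t s : ℕ} {m : Fin t → Fin t → ℕ} (x : Fin t → W)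
    (hx : Function.Injective x)
    (hjoin : ∀ a b, a < b → RobustlyJoined G s
      (t + (s - 1) * ∑ p : Fin t × Fin t, if p.1 < p.2 then m p.1 p.2 else 0) (x a) (x b)) :
    ContainsMultiSubdiv G t m s := by
  set J : Finset (Fin t × Fin t × ℕ) := (univ.filter fun p : Fin t × Fin t => p.1 < p.2).biUnion
    fun p => (range (m p.1 p.2)).image fun c => (p.1, p.2, c)
  have hJ : ∀ τ, τ ∈ J ↔ τ.1 < τ.2.1 ∧ τ.2.2 < m τ.1 τ.2.1 := by
    rintro ⟨a, b, c⟩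
    simp only [J, mem_biUnion, mem_filter, mem_univ, true_and, mem_image, mem_range, Prod.mk.injEq]
    constructor
    · rintro ⟨p, hp, c, hc, rfl, rfl, rfl⟩; exact ⟨hp, hc⟩
    · rintro ⟨hab, hc⟩; exact ⟨(a, b), hab, c, hc, rfl, rfl, rfl⟩
  have hcardJ : #J ≤ ∑ p : Fin t × Fin t, if p.1 < p.2 then m p.1 p.2 else 0 := by
    rw [← sum_filter]
    exact card_biUnion_le.trans (sum_le_sum fun p _ => card_image_le.trans (card_range _).le)
  obtain ⟨π, hπ, hdisj⟩ := exists_internallyDisjoint_paths (G := G) (s := s)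
    (fun τ => x τ.1) (fun τ => x τ.2.1) (univ.image x) J
    (fun τ hτ => hjoin _ _ ((hJ τ).1 hτ).1)
    (by grw [card_image_le, card_univ, Fintype.card_fin, hcardJ])
  have hmem : ∀ {a b : Fin t} (c : Fin (m a b)), a < b → (a, b, (c : ℕ)) ∈ J :=
    fun c hab => (hJ _).2 ⟨hab, c.isLt⟩
  refine ⟨x, fun a b c => π (a, b, c), hx, fun a b hab c => ?_, fun a b hab c n h0 hn d => ?_,
    fun a b hab a' b' hab' c c' hne n n' h0 hn h0' hn' => ?_⟩
  · exact ⟨(hπ _ (hmem c hab)).1, (hπ _ (hmem c hab)).2.1, (hπ _ (hmem c hab)).2.2.1⟩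
  · exact fun h => (hπ _ (hmem c hab)).2.2.2 n h0 hn (mem_image.2 ⟨d, mem_univ _, h.symm⟩)
  · exact hdisj _ (hmem c hab) _ (hmem c' hab') hne n n' h0 hn h0' hn'

end Subdivision

/-- Colour the pair `{a, b}` by some `c` with `Q a b c`. -/
lemma RamseyProp.exists_monochromatic {k t r : ℕ} (hr : RamseyProp k t r) (hk : 1 ≤ k)
    (Q : Fin r → Fin r → Fin k → Prop) (hQ : ∀ a b, a ≠ b → ∃ c, Q a b c)
    (hsymm : ∀ a b c, Q a b c → Q b a c) :
    ∃ (c : Fin k) (e : Fin t ↪ Fin r), ∀ a b, a ≠ b → Q (e a) (e b) c := by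
  classical
  let χ : Fin r → Fin r → Fin k := fun a b =>
    if h : min a b ≠ max a b then (hQ _ _ h).choose else ⟨0, hk⟩
  obtain ⟨c, S, hS, hmono⟩ := hr χ fun a b => by simp only [χ, min_comm, max_comm]
  obtain ⟨e, heS⟩ : ∃ e : Fin t ↪o Fin r, ∀ a, e a ∈ S :=
    ⟨S.orderEmbOfFin hS, S.orderEmbOfFin_mem hS⟩
  refine ⟨c, e.toEmbedding, fun a b hab => ?_⟩
  have hne : e a ≠ e b := e.injective.ne hab
  have hminmax : min (e a) (e b) ≠ max (e a) (e b) := by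
    rcases le_total (e a) (e b) with h | h <;> simp [h, hne, hne.symm]
  have hχ := hmono _ (heS a) _ (heS b) hne
  have hQc : Q (min (e a) (e b)) (max (e a) (e b)) c := by
    have hc : (hQ _ _ hminmax).choose = c := by simpa only [χ, dif_pos hminmax] using hχ
    exact hc ▸ (hQ _ _ hminmax).choose_spec
  rcases le_total (e a) (e b) with h | h
  · rwa [min_eq_left h, max_eq_right h] at hQc
  · rw [min_eq_right h, max_eq_left h] at hQc
    exact hsymm _ _ _ hQc

def richGraph (G : SimpleGraph W) (k h : ℕ) (K δ : ℝ) : SimpleGraph (ℕ → W) :=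
  SimpleGraph.fromRel fun u u' =>
    ∃ ℓ, 1 ≤ ℓ ∧ ℓ ≤ k ∧ ∃ i j, i < k ∧ j < k ∧ Rich G k h K δ i j (u ℓ) (u' ℓ)

lemma richGraph_cliqueFree [Fintype W] [DecidableEq W] {G : SimpleGraph W} {t k r : ℕ}
    {m : Fin t → Fin t → ℕ} {K δ : ℝ} (hr : RamseyProp k t r) (hk : 1 ≤ k)
    (hmax : (maxDeg G : ℝ) ≤ K * δ) (hfree : ¬ ContainsMultiSubdiv G t m (2 * k)) :
    (richGraph G k (nH t k m) K δ).CliqueFree r := by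
  rw [SimpleGraph.cliqueFree_iff]
  refine ⟨fun f => hfree ?_⟩
  let Q : Fin r → Fin r → Fin k → Prop := fun a b c => ∃ i j, i < k ∧ j < k ∧
    (Rich G k (nH t k m) K δ i j (f a (c + 1)) (f b (c + 1)) ∨
      Rich G k (nH t k m) K δ i j (f b (c + 1)) (f a (c + 1)))
  have hQ : ∀ a b, a ≠ b → ∃ c, Q a b c := by
    intro a b hab
    obtain ⟨-, hrich⟩ :=
      (SimpleGraph.fromRel_adj _ _ _).1 (f.toHom.map_adj ((SimpleGraph.top_adj _ _).2 hab))
    rcases hrich with ⟨ℓ, h1, hℓ, i, j, hi, hj, hR⟩ | ⟨ℓ, h1, hℓ, i, j, hi, hj, hR⟩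
    · exact ⟨⟨ℓ - 1, by omega⟩, i, j, hi, hj, Or.inl (by rwa [Nat.sub_add_cancel h1])⟩
    · exact ⟨⟨ℓ - 1, by omega⟩, i, j, hi, hj, Or.inr (by rwa [Nat.sub_add_cancel h1])⟩
  obtain ⟨c, e, he⟩ := RamseyProp.exists_monochromatic hr hk Q hQ
    fun a b c ⟨i, j, hi, hj, hR⟩ => ⟨i, j, hi, hj, hR.symm⟩
  have hjoin : ∀ a b, a ≠ b →
      RobustlyJoined G (2 * k) (nH t k m) (f (e a) (c + 1)) (f (e b) (c + 1)) := by
    intro a b hab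
    have hh : 1 ≤ nH t k m := by
      have := Fin.pos a; unfold nH; omega
    obtain ⟨i, j, hi, hj, hR | hR⟩ := he a b hab
    · exact Rich.robustlyJoined hR hmax hh hi hj
    · exact RobustlyJoined.symm (Rich.robustlyJoined hR hmax hh hi hj)
  refine containsMultiSubdiv_of_robustlyJoined (fun a => f (e a) (c + 1)) (fun a b hxab => ?_)
    fun a b hab => hjoin a b hab.ne
  by_contra hab
  obtain ⟨i, j, -, -, hR | hR⟩ := he a b hab
  · exact hR.1 hxab
  · exact hR.1 hxab.symm

section PoorWalks

variable {G : SimpleGraph W} {k h : ℕ} {K δ : ℝ}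

/-- The paper's vectors `(u_{-k}, …, u_k)`, stored as `u 0, …, u (2 * k)`. -/
def poorWalks (G : SimpleGraph W) (k h : ℕ) (K δ : ℝ) (S : Finset W) : Set (ℕ → W) :=
  {u | PadSeq (2 * k) u ∧ IsWalkSeq G (2 * k) u ∧ u 0 ∈ S ∧ u (2 * k) ∈ S ∧
    ∀ ℓ, 1 ≤ ℓ → ℓ ≤ k → ∀ i j, i < k → j < k → ¬ Rich G k h K δ i j (u (k - ℓ)) (u (k + ℓ))}

lemma appendSeq_revSeq_inj {u u' q q' : ℕ → W} (hu : PadSeq k u) (hu' : PadSeq k u')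
    (hq : PadSeq k q) (hq' : PadSeq k q') (hu0 : u 0 = u' 0) (hq0 : q 0 = q' 0)
    (h : appendSeq k (revSeq k u) u' = appendSeq k (revSeq k q) q') : u = q ∧ u' = q' := by
  refine ⟨PadSeq.ext hu hq fun n hn => ?_, PadSeq.ext hu' hq' fun n _ => ?_⟩
  · simpa [appendSeq_of_le _ _ (Nat.sub_le k n), revSeq, Nat.sub_sub_self hn] using
      congrFun h (k - n)
  · simpa [appendSeq_add (show revSeq k u k = u' 0 by simpa [revSeq]),
      appendSeq_add (show revSeq k q k = q' 0 by simpa [revSeq])] using congrFun h (k + n)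

lemma appendSeq_revSeq_mem_poorWalks [Fintype W] {S : Finset W} {v : W} {u u' : ℕ → W}
    (hu : u ∈ walksFrom G k v) (hu' : u' ∈ walksFrom G k v) (huS : u k ∈ S) (hu'S : u' k ∈ S)
    (hnadj : ¬ (richGraph G k h K δ).Adj u u') :
    appendSeq k (revSeq k u) u' ∈ poorWalks G k h K δ S := by
  obtain ⟨hpad, hw, hu0⟩ := mem_walksFrom.1 hu
  obtain ⟨hpad', hw', hu0'⟩ := mem_walksFrom.1 hu'
  have hjoin : revSeq k u k = u' 0 := by simp [revSeq, hu0, hu0']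
  have hmid : ∀ n, appendSeq k (revSeq k u) u' (k + n) = u' n := appendSeq_add hjoin
  refine ⟨fun n hn => ?_, by simpa [two_mul] using IsWalkSeq.append hw.rev hw' hjoin,
    by simpa [appendSeq, revSeq], by rwa [two_mul, hmid], fun ℓ h1 hℓ i j hi hj hrich => ?_⟩
  · rw [show n = k + (n - k) by omega, two_mul, hmid, hmid, hpad' _ (by omega)]
  · rw [hmid, appendSeq_of_le _ _ (Nat.sub_le k ℓ)] at hrich
    simp only [revSeq, Nat.sub_sub_self hℓ] at hrich
    refine hnadj ((SimpleGraph.fromRel_adj _ _ _).2 ⟨?_, Or.inl ⟨ℓ, h1, hℓ, i, j, hi, hj, hrich⟩⟩)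
    rintro rfl
    exact hrich.1 rfl

variable [Fintype W] [DecidableEq W]

lemma card_mul_pow_minDeg_le_sum_card (G : SimpleGraph W) (k : ℕ) (S : Finset W) :
    #S * minDeg G ^ k ≤ ∑ v, #((walksFrom G k v).filter fun u => u k ∈ S) := by
  calc #S * minDeg G ^ k = ∑ y ∈ S, minDeg G ^ k := by rw [sum_const, smul_eq_mul]
    _ ≤ ∑ y ∈ S, #(walksFrom G k y) := sum_le_sum fun y _ => pow_minDeg_le_card_walksFrom G k y
    _ = ∑ y ∈ S, ∑ v, #((walksFrom G k y).filter fun u => u k = v) :=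
        sum_congr rfl fun y _ => card_eq_sum_card_fiberwise fun u _ => mem_univ _
    _ = ∑ v, ∑ y ∈ S, #((walksFrom G k v).filter fun u => u k = y) := by
        rw [sum_comm]
        exact sum_congr rfl fun v _ => sum_congr rfl fun y _ =>
          card_walksFrom_filter_eq_comm G k y v
    _ = ∑ v, #((walksFrom G k v).filter fun u => u k ∈ S) := by
        refine sum_congr rfl fun v _ => ?_
        rw [card_eq_sum_card_fiberwise (s := (walksFrom G k v).filter fun u => u k ∈ S)
          (f := fun u => u k) (t := S) fun u hu => (mem_filter.1 hu).2]
        refine sum_congr rfl fun y hy => ?_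
        rw [filter_filter]
        exact congrArg card (filter_congr fun u _ => ⟨fun h => ⟨h ▸ hy, h⟩, And.right⟩)

open Classical in
lemma sum_card_not_adj_le_ncard_poorWalks (S : Finset W) :
    ∑ v, #(((walksFrom G k v).filter (fun u => u k ∈ S) ×ˢ
        (walksFrom G k v).filter (fun u => u k ∈ S)).filter
      fun p => ¬ (richGraph G k h K δ).Adj p.1 p.2) ≤ (poorWalks G k h K δ S).ncard := by
  rw [← card_sigma, ← Set.ncard_coe_finset]
  refine Set.ncard_le_ncard_of_injOn (fun p => appendSeq k (revSeq k p.2.1) p.2.2) ?_ ?_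
    ((paddedSeqs (2 * k)).finite_toSet.subset fun u hu => mem_paddedSeqs.2 hu.1)
  · rintro ⟨v, u, u'⟩ hp
    simp only [mem_coe, mem_sigma, mem_univ, true_and, mem_filter, mem_product] at hp
    obtain ⟨⟨⟨hu, huS⟩, hu', hu'S⟩, hnadj⟩ := hp
    exact appendSeq_revSeq_mem_poorWalks hu hu' huS hu'S hnadj
  · rintro ⟨v, u, u'⟩ hp ⟨w, q, q'⟩ hp' heq
    simp only [mem_coe, mem_sigma, mem_univ, true_and, mem_filter, mem_product] at hp hp'
    obtain ⟨hu, hu'⟩ := And.intro (mem_walksFrom.1 hp.1.1.1) (mem_walksFrom.1 hp.1.2.1)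
    obtain ⟨hq, hq'⟩ := And.intro (mem_walksFrom.1 hp'.1.1.1) (mem_walksFrom.1 hp'.1.2.1)
    obtain ⟨huq, hu'q'⟩ := appendSeq_revSeq_inj hu.1 hu'.1 hq.1 hq'.1
      (hu.2.2.trans hu'.2.2.symm) (hq.2.2.trans hq'.2.2.symm) heq
    have hvw : v = w := by rw [← hu.2.2, ← hq.2.2, huq]
    subst huq hu'q' hvw
    rfl

open Classical in
/-- Cauchy–Schwarz over the centre `v`, then Turán among the walks from each centre. -/
lemma sq_card_mul_pow_minDeg_le {r : ℕ} (S : Finset W)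
    (hfree : (richGraph G k h K δ).CliqueFree r) :
    (#S * minDeg G ^ k) ^ 2 ≤ Fintype.card W * (r - 1) * (poorWalks G k h K δ S).ncard := by
  set A := fun v => (walksFrom G k v).filter fun u => u k ∈ S
  calc (#S * minDeg G ^ k) ^ 2 ≤ (∑ v, #(A v)) ^ 2 := by
        gcongr; exact card_mul_pow_minDeg_le_sum_card G k S
    _ ≤ Fintype.card W * ∑ v, #(A v) ^ 2 := sq_sum_le_card_mul_sum_sq
    _ ≤ Fintype.card W * ∑ v, (r - 1) * #((A v ×ˢ A v).filter
          fun p => ¬ (richGraph G k h K δ).Adj p.1 p.2) := by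
        gcongr with v
        exact SimpleGraph.CliqueFree.sq_card_le_mul_card_not_adj hfree (A v)
    _ ≤ Fintype.card W * (r - 1) * (poorWalks G k h K δ S).ncard := by
        rw [← mul_sum, mul_assoc]
        gcongr
        exact sum_card_not_adj_le_ncard_poorWalks S

end PoorWalks

theorem many_poor_walks_general
    (t : ℕ) (m : Fin t → Fin t → ℕ)
    (k K : ℕ) (hk : 1 ≤ k)
    (r : ℕ) (hr : RamseyProp k t r)
    (n : ℕ) (G : SimpleGraph (Fin n))
    (hHfree : ¬ ContainsMultiSubdiv G t m (2 * k))
    (hreg : maxDeg G ≤ K * minDeg G)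
    (S : Finset (Fin n)) :
    ((S.card : ℝ) ^ 2 * (minDeg G : ℝ) ^ (2 * k)) / (4 * (r : ℝ) ^ 2 * n) ≤
      (Set.ncard {u : ℕ → Fin n | PadSeq (2 * k) u ∧
        (∀ s, s < 2 * k → G.Adj (u s) (u (s + 1))) ∧
        u 0 ∈ S ∧ u (2 * k) ∈ S ∧
        ∀ ℓ, 1 ≤ ℓ → ℓ ≤ k → ∀ i j, i < k → j < k →
          ¬ Rich G k (nH t k m) (K : ℝ) ((minDeg G : ℝ)) i j (u (k - ℓ)) (u (k + ℓ))} : ℝ) := by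
  change _ ≤ ((poorWalks G k (nH t k m) K (minDeg G) S).ncard : ℝ)
  have hmax : (maxDeg G : ℝ) ≤ K * minDeg G := by exact_mod_cast hreg
  have hcount := sq_card_mul_pow_minDeg_le S (richGraph_cliqueFree hr hk hmax hHfree)
  rw [Fintype.card_fin] at hcount
  have hle : (#S * minDeg G ^ k) ^ 2 ≤
      (poorWalks G k (nH t k m) K (minDeg G) S).ncard * (4 * r ^ 2 * n) := by
    refine hcount.trans (le_of_le_of_eq (Nat.mul_le_mul_right _ (Nat.mul_le_mul_left n
      (show r - 1 ≤ 4 * r ^ 2 by nlinarith [Nat.sub_le r 1]))) (by ring))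
  refine div_le_of_le_mul₀ (by positivity) (by positivity) ?_
  rw [show (#S : ℝ) ^ 2 * (minDeg G : ℝ) ^ (2 * k) = ((#S * minDeg G ^ k) ^ 2 : ℕ) by
    push_cast; ring]
  exact_mod_cast hle

/-- **Lemma 4.5.** Let `F` be a multigraph on `t` vertices, `H = F^{2k-1}`,
`r = R_k(t)`. If `G` is an `H`-free `K`-almost-regular graph on `n` vertices with minimum
degree `δ > 0` and `S ⊆ V(G)` satisfies `|S| ≥ 2nr/δ^k`, then there are at least
`|S|²δ^{2k}/(4r²n)` tuples `(u_{-k}, …, u_k)` (indexed here by `u 0, …, u (2k)`) with both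
endpoints in `S`, consecutive vertices adjacent, and `(u_{-ℓ}, u_ℓ)` `(i,j)`-poor for all
`1 ≤ ℓ ≤ k`, `0 ≤ i, j ≤ k-1`. -/
theorem many_poor_walks
    (t : ℕ) (m : Fin t → Fin t → ℕ)
    (hsymm : ∀ a b, m a b = m b a) (hirr : ∀ a, m a a = 0)
    (k K : ℕ) (hk : 1 ≤ k) (hK : 1 ≤ K)
    (r : ℕ) (hr : RamseyProp k t r) (hrleast : ∀ r', RamseyProp k t r' → r ≤ r')
    (n : ℕ) (G : SimpleGraph (Fin n))
    (hHfree : ¬ ContainsMultiSubdiv G t m (2 * k))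
    (hreg : maxDeg G ≤ K * minDeg G)
    (hδpos : 0 < minDeg G)
    (S : Finset (Fin n))
    (hS : 2 * (n : ℝ) * r / ((minDeg G : ℝ) ^ k) ≤ (S.card : ℝ)) :
    ((S.card : ℝ) ^ 2 * (minDeg G : ℝ) ^ (2 * k)) / (4 * (r : ℝ) ^ 2 * n) ≤
      (Set.ncard {u : ℕ → Fin n | PadSeq (2 * k) u ∧
        (∀ s, s < 2 * k → G.Adj (u s) (u (s + 1))) ∧
        u 0 ∈ S ∧ u (2 * k) ∈ S ∧
        ∀ ℓ, 1 ≤ ℓ → ℓ ≤ k → ∀ i j, i < k → j < k →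
          ¬ Rich G k (nH t k m) (K : ℝ) ((minDeg G : ℝ)) i j (u (k - ℓ)) (u (k + ℓ))} : ℝ) :=
  many_poor_walks_general t m k K hk r hr n G hHfree hreg S
end

section
/- Let k ≥ 1 and h ≥ 1 be integers and let L be a real number with L ≥ 2k+1 and L ≥ (h+2)(2k+1)+1. Suppose u_{−k}u_{−k+1}…u_k is a path of length 2k in a graph G that is not L-good, but every subpath of it of length k is L-good. Then there exist integers 1 ≤ α, β ≤ k with α + β > k such that there exist at least (h+2)(2k+1)+1 pairwise internally vertex-disjoint paths of length α+β between u_{−α} and u_{β} in G. -/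
open SimpleGraph

variable {V : Type*} [Fintype V] [DecidableEq V]

section AuxLemmas
-- auxiliary lemmas

theorem good_congr (G : SimpleGraph V) (L : ℝ) : ∀ (ℓ : ℕ) (p p' : ℕ → V),
    (∀ a, a ≤ ℓ → p a = p' a) → (Good G L ℓ p ↔ Good G L ℓ p') := by
  intro ℓ
  induction ℓ using Nat.strong_induction_on with
  | _ ℓ IH =>
    intro p p' hpp
    have hps : PathSeq G ℓ p ↔ PathSeq G ℓ p' := by
      constructor <;> rintro ⟨h1, h2⟩ <;> constructor <;> intro i
      · intro hi; rw [← hpp i (by omega), ← hpp (i+1) (by omega)]; exact h1 i hi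
      · intro j hij hj; rw [← hpp i (by omega), ← hpp j hj]; exact h2 i j hij hj
      · intro hi; rw [hpp i (by omega), hpp (i+1) (by omega)]; exact h1 i hi
      · intro j hij hj; rw [hpp i (by omega), hpp j hj]; exact h2 i j hij hj
    have hsub : ∀ q q' : ℕ → V, (∀ a, a ≤ ℓ → q a = q' a) →
        ((∀ i j, i < j → j ≤ ℓ → ¬(i = 0 ∧ j = ℓ) → Good G L (j - i) (fun a => q (i + a))) ↔
         (∀ i j, i < j → j ≤ ℓ → ¬(i = 0 ∧ j = ℓ) → Good G L (j - i) (fun a => q' (i + a)))) := by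
      intro q q' hqq
      have key : ∀ i j, i < j → j ≤ ℓ → ¬(i = 0 ∧ j = ℓ) →
          (Good G L (j - i) (fun a => q (i + a)) ↔ Good G L (j - i) (fun a => q' (i + a))) := by
        intro i j hij hj hne
        have hji : j - i < ℓ := by
          rcases Nat.eq_zero_or_pos i with h | h
          · subst h
            have : j ≠ ℓ := fun h => hne ⟨rfl, h⟩
            omega
          · omega
        exact IH (j - i) hji _ _ (fun a ha => hqq (i + a) (by omega))
      constructor <;> intro h i j hij hj hne
      · exact (key i j hij hj hne).mp (h i j hij hj hne)
      · exact (key i j hij hj hne).mpr (h i j hij hj hne)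
    rw [Good, Good]
    rw [hpp 0 (by omega), hpp ℓ le_rfl]
    constructor <;> rintro ⟨⟨h1, h2⟩, h3⟩
    · exact ⟨⟨hps.mp h1, (hsub p p' hpp).mp h2⟩, h3⟩
    · exact ⟨⟨hps.mpr h1, (hsub p p' hpp).mpr h2⟩, h3⟩

def AdmSet (G : SimpleGraph V) (L : ℝ) (ℓ : ℕ) (x y : V) : Set (ℕ → V) :=
  {q : ℕ → V | q 0 = x ∧ q ℓ = y ∧ PadSeq ℓ q ∧ PathSeq G ℓ q ∧
      ∀ i j, i < j → j ≤ ℓ → ¬(i = 0 ∧ j = ℓ) → Good G L (j - i) (fun a => q (i + a))}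

theorem good_iff (G : SimpleGraph V) (L : ℝ) (ℓ : ℕ) (p : ℕ → V) :
    Good G L ℓ p ↔ Admissible G L ℓ p ∧
      ((AdmSet G L ℓ (p 0) (p ℓ)).ncard : ℝ) ≤ fBound ℓ L := by
  rw [Good]; exact Iff.rfl

theorem aux_pad_finite (ℓ : ℕ) : {q : ℕ → V | PadSeq ℓ q}.Finite := by
  apply Set.Finite.of_finite_image (f := fun q (i : Fin (ℓ+1)) => q i) (Set.toFinite _)
  intro q1 h1 q2 h2 heq
  funext a
  by_cases ha : a ≤ ℓ
  · exact congrFun heq ⟨a, by omega⟩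
  · rw [h1 a (by omega), h2 a (by omega)]
    exact congrFun heq ⟨ℓ, by omega⟩

theorem admSet_finite (G : SimpleGraph V) (L : ℝ) (ℓ : ℕ) (x y : V) :
    (AdmSet G L ℓ x y).Finite :=
  (aux_pad_finite ℓ).subset (fun q hq => hq.2.2.1)

theorem aux_ncard_prod {α β : Type*} (s : Set α) (t : Set β) :
    (s ×ˢ t).ncard = s.ncard * t.ncard := by
  rw [← Nat.card_coe_set_eq, ← Nat.card_coe_set_eq, ← Nat.card_coe_set_eq,
    ← Nat.card_prod]
  exact Nat.card_congr (Equiv.Set.prod s t)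

theorem aux_ncard_iUnion_le {α ι : Type*} [Fintype ι] (S : ι → Set α) :
    (⋃ i, S i).ncard ≤ ∑ i, (S i).ncard := by
  classical
  have key : ∀ (s : Finset ι), (⋃ i ∈ s, S i).ncard ≤ ∑ i ∈ s, (S i).ncard := by
    intro s
    induction s using Finset.induction_on with
    | empty => simp
    | @insert a s ha ih =>
      rw [Finset.set_biUnion_insert, Finset.sum_insert ha]
      exact le_trans (Set.ncard_union_le _ _) (by omega)
  have := key Finset.univ
  simpa [Set.biUnion_univ] using this

theorem aux_vertex_bound (G : SimpleGraph V) (L : ℝ) (hL : (1:ℝ) ≤ L) (m t : ℕ)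
    (ht0 : 0 < t) (htm : t < m) (x y v : V) :
    (((AdmSet G L m x y) ∩ {q | q t = v}).ncard : ℝ) ≤ fBound t L * fBound (m - t) L := by
  have hL0 : (0:ℝ) ≤ L := le_trans zero_le_one hL
  have hf1 : (0:ℝ) ≤ fBound t L := pow_nonneg hL0 _
  have hf2 : (0:ℝ) ≤ fBound (m - t) L := pow_nonneg hL0 _
  rcases Set.eq_empty_or_nonempty ((AdmSet G L m x y) ∩ {q | q t = v}) with he | ⟨q₀, hq₀⟩
  · rw [he]; simp [mul_nonneg hf1 hf2]
  obtain ⟨⟨hq0, hqm, hqpad, hqps, hqgood⟩, hqt⟩ := hq₀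
  -- Good facts about the two halves of q₀
  have hg1 : Good G L t (fun a => q₀ (0 + a)) := by
    have := hqgood 0 t ht0 (by omega) (by omega)
    simpa using this
  have hg2 : Good G L (m - t) (fun a => q₀ (t + a)) := hqgood t m htm le_rfl (by omega)
  rw [good_iff] at hg1 hg2
  have hb1 : ((AdmSet G L t x v).ncard : ℝ) ≤ fBound t L := by
    have := hg1.2
    have e0 : q₀ (0 + 0) = x := by rw [Nat.zero_add]; exact hq0
    have et : q₀ (0 + t) = v := by rw [Nat.zero_add]; exact hqt
    rwa [e0, et] at this
  have hb2 : ((AdmSet G L (m - t) v y).ncard : ℝ) ≤ fBound (m - t) L := by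
    have := hg2.2
    have e0 : q₀ (t + 0) = v := hqt
    have et : q₀ (t + (m - t)) = y := by rw [show t + (m - t) = m by omega]; exact hqm
    rwa [e0, et] at this
  -- the injection
  set F : (ℕ → V) → ((ℕ → V) × (ℕ → V)) := fun q =>
    (fun a => if a ≤ t then q a else q t, fun a => if a ≤ m - t then q (t + a) else q m) with hF
  have hmaps : ∀ q ∈ (AdmSet G L m x y) ∩ {q | q t = v},
      F q ∈ (AdmSet G L t x v) ×ˢ (AdmSet G L (m - t) v y) := by
    rintro q ⟨⟨h0, hm', hpad, ⟨hadj, hne⟩, hgood⟩, hvt⟩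
    constructor
    · refine ⟨by simp [hF, h0], by simpa [hF] using hvt, ?_, ⟨?_, ?_⟩, ?_⟩
      · intro i hi
        by_cases h : i ≤ t
        · have : i = t := by omega
          subst this; rfl
        · simp [hF, h]
      · intro i hi
        have e1 : (F q).1 i = q i := by simp [hF, show i ≤ t by omega]
        have e2 : (F q).1 (i+1) = q (i+1) := by simp [hF, show i+1 ≤ t by omega]
        rw [e1, e2]; exact hadj i (by omega)
      · intro i j hij hj
        have e1 : (F q).1 i = q i := by simp [hF, show i ≤ t by omega]
        have e2 : (F q).1 j = q j := by simp [hF, hj]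
        rw [e1, e2]; exact hne i j hij (by omega)
      · intro i j hij hj hnij
        have hg := hgood i j hij (by omega) (by omega)
        refine (good_congr G L (j - i) _ _ ?_).mp hg
        intro a ha
        simp only [hF]
        rw [if_pos (show i + a ≤ t by omega)]
    · refine ⟨by simpa [hF] using hvt, ?_, ?_, ⟨?_, ?_⟩, ?_⟩
      · simp only [hF]
        rw [if_pos (le_refl (m - t)), show t + (m - t) = m by omega]; exact hm'
      · intro i hi
        simp only [hF]
        by_cases h : i ≤ m - t
        · have : i = m - t := by omega
          subst this; simp
        · simp [h, show t + (m-t) = m by omega]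
      · intro i hi
        have e1 : (F q).2 i = q (t + i) := by simp [hF, show i ≤ m - t by omega]
        have e2 : (F q).2 (i+1) = q (t + i + 1) := by
          simp only [hF]
          rw [if_pos (show i + 1 ≤ m - t by omega), show t + (i+1) = t + i + 1 by omega]
        rw [e1, e2]; exact hadj (t + i) (by omega)
      · intro i j hij hj
        have e1 : (F q).2 i = q (t + i) := by simp [hF, show i ≤ m - t by omega]
        have e2 : (F q).2 j = q (t + j) := by simp [hF, hj]
        rw [e1, e2]; exact hne (t + i) (t + j) (by omega) (by omega)
      · intro i j hij hj hnij
        have hg := hgood (t + i) (t + j) (by omega) (by omega) (by omega)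
        have hd : (t + j) - (t + i) = j - i := by omega
        rw [hd] at hg
        refine (good_congr G L (j - i) _ _ ?_).mp hg
        intro a ha
        simp only [hF]
        rw [if_pos (show i + a ≤ m - t by omega), show t + (i + a) = t + i + a by omega]
  have hinj : Set.InjOn F ((AdmSet G L m x y) ∩ {q | q t = v}) := by
    rintro q1 ⟨⟨_, _, hpad1, _, _⟩, _⟩ q2 ⟨⟨_, _, hpad2, _, _⟩, _⟩ heq
    have heq1 := congrArg Prod.fst heq
    have heq2 := congrArg Prod.snd heq
    funext a
    by_cases ha : a ≤ t
    · have := congrFun heq1 a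
      simpa [hF, ha] using this
    · by_cases ha2 : a ≤ m
      · have := congrFun heq2 (a - t)
        simp only [hF] at this
        rw [if_pos (show a - t ≤ m - t by omega), if_pos (show a - t ≤ m - t by omega),
          show t + (a - t) = a by omega] at this
        exact this
      · have := congrFun heq2 (m - t)
        simp only [hF] at this
        rw [if_pos le_rfl, if_pos le_rfl, show t + (m - t) = m by omega] at this
        rw [hpad1 a (by omega), hpad2 a (by omega)]
        exact this
  have hfin : ((AdmSet G L t x v) ×ˢ (AdmSet G L (m - t) v y)).Finite :=
    (admSet_finite G L t x v).prod (admSet_finite G L (m - t) v y)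
  have hcard := Set.ncard_le_ncard_of_injOn F hmaps hinj hfin
  rw [aux_ncard_prod] at hcard
  calc (((AdmSet G L m x y) ∩ {q | q t = v}).ncard : ℝ)
      ≤ ((AdmSet G L t x v).ncard : ℝ) * ((AdmSet G L (m - t) v y).ncard : ℝ) := by
        exact_mod_cast hcard
    _ ≤ fBound t L * fBound (m - t) L :=
        mul_le_mul hb1 hb2 (Nat.cast_nonneg _) hf1

theorem aux_greedy (G : SimpleGraph V) (m : ℕ) (hm : 2 ≤ m) (x y : V)
    (A : Set (ℕ → V)) (hAfin : A.Finite)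
    (hA : ∀ q ∈ A, PathSeq G m q ∧ q 0 = x ∧ q m = y) (C : ℝ) (hC0 : 0 ≤ C)
    (hC : ∀ (v : V) (t : ℕ), 0 < t → t < m → ((A ∩ {q | q t = v}).ncard : ℝ) ≤ C)
    (N : ℕ) (hN : (N : ℝ) * ((m : ℝ) * (m : ℝ)) * C < (A.ncard : ℝ)) :
    ManyDisjointPaths G m x y N := by
  have claim : ∀ n, n ≤ N → ∃ P : Fin n → (ℕ → V), (∀ a, P a ∈ A) ∧
      (∀ a b, a ≠ b → ∀ i j, 0 < i → i < m → 0 < j → j < m → P a i ≠ P b j) := by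
    intro n
    induction n with
    | zero => exact fun _ => ⟨fun a => a.elim0, fun a => a.elim0, fun a => a.elim0⟩
    | succ n ih =>
      intro hn
      obtain ⟨P, hPA, hPdisj⟩ := ih (by omega)
      -- the conflict set
      set S : Fin n × Fin m × Fin m → Set (ℕ → V) := fun z =>
        if 0 < (z.2.1 : ℕ) ∧ 0 < (z.2.2 : ℕ) then
          A ∩ {q | q (z.2.1 : ℕ) = P z.1 (z.2.2 : ℕ)} else ∅ with hS
      have hSsub : ∀ z, S z ⊆ A := by
        intro z
        simp only [hS]
        split_ifs
        · exact Set.inter_subset_left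
        · exact Set.empty_subset _
      have hDsub : (⋃ z, S z) ⊆ A := Set.iUnion_subset hSsub
      have hScard : ∀ z, ((S z).ncard : ℝ) ≤ C := by
        intro z
        simp only [hS]
        split_ifs with h
        · exact hC _ _ h.1 (z.2.1).2
        · simp [hC0]
      have hDcard : (((⋃ z, S z).ncard : ℕ) : ℝ) < (A.ncard : ℝ) := by
        have h1 : ((⋃ z, S z).ncard : ℝ) ≤ ∑ z : Fin n × Fin m × Fin m, ((S z).ncard : ℝ) := by
          have := aux_ncard_iUnion_le S
          calc ((⋃ z, S z).ncard : ℝ) ≤ ((∑ z, (S z).ncard : ℕ) : ℝ) := by exact_mod_cast this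
            _ = ∑ z : Fin n × Fin m × Fin m, ((S z).ncard : ℝ) := by push_cast; ring
        have h2 : ∑ z : Fin n × Fin m × Fin m, ((S z).ncard : ℝ) ≤
            ((n : ℝ) * ((m : ℝ) * (m : ℝ))) * C := by
          calc ∑ z : Fin n × Fin m × Fin m, ((S z).ncard : ℝ)
              ≤ ∑ _z : Fin n × Fin m × Fin m, C := Finset.sum_le_sum (fun z _ => hScard z)
            _ = ((n : ℝ) * ((m : ℝ) * (m : ℝ))) * C := by
              rw [Finset.sum_const]
              simp [mul_assoc, mul_comm]
        have h3 : ((n : ℝ) * ((m : ℝ) * (m : ℝ))) * C ≤ ((N : ℝ) * ((m : ℝ) * (m : ℝ))) * C := by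
          apply mul_le_mul_of_nonneg_right _ hC0
          apply mul_le_mul_of_nonneg_right _ (by positivity)
          exact_mod_cast Nat.cast_le.mpr (by omega)
        linarith
      have hne : ¬ A ⊆ (⋃ z, S z) := by
        intro hsub
        have := Set.ncard_le_ncard hsub (hAfin.subset hDsub)
        exact absurd (Nat.cast_le.mpr this) (not_le.mpr hDcard)
      obtain ⟨q, hqA, hqD⟩ := Set.not_subset.mp hne
      have hqP : ∀ (a : Fin n) (t s : ℕ), 0 < t → t < m → 0 < s → s < m →
          q t ≠ P a s := by
        intro a t s ht0 htm hs0 hsm heq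
        apply hqD
        refine Set.mem_iUnion.mpr ⟨⟨a, ⟨t, htm⟩, ⟨s, hsm⟩⟩, ?_⟩
        simp only [hS]
        rw [if_pos ⟨ht0, hs0⟩]
        exact ⟨hqA, heq⟩
      refine ⟨fun a => if h : (a : ℕ) < n then P ⟨a, h⟩ else q, ?_, ?_⟩
      · intro a
        by_cases h : (a : ℕ) < n
        · simp only [dif_pos h]; exact hPA _
        · simp only [dif_neg h]; exact hqA
      · intro a b hab i j hi0 him hj0 hjm
        by_cases ha : (a : ℕ) < n <;> by_cases hb : (b : ℕ) < n
        · simp only [dif_pos ha, dif_pos hb]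
          refine hPdisj ⟨a, ha⟩ ⟨b, hb⟩ ?_ i j hi0 him hj0 hjm
          intro h
          exact hab (Fin.ext (by simpa using congrArg Fin.val h))
        · simp only [dif_pos ha, dif_neg hb]
          exact (hqP ⟨a, ha⟩ j i hj0 hjm hi0 him).symm
        · simp only [dif_neg ha, dif_pos hb]
          exact hqP ⟨b, hb⟩ i j hi0 him hj0 hjm
        · exfalso
          apply hab
          apply Fin.ext
          have := a.2; have := b.2
          omega
  obtain ⟨P, hPA, hPdisj⟩ := claim N le_rfl
  refine ⟨P, fun a => ⟨(hA _ (hPA a)).1, (hA _ (hPA a)).2.1, (hA _ (hPA a)).2.2⟩, ?_, hPdisj⟩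
  intro a b hab
  exact ⟨1, by omega, hPdisj a b hab 1 1 (by omega) (by omega) (by omega) (by omega)⟩

theorem aux_exp_ineq (t m : ℕ) (ht0 : 0 < t) (htm : t < m) :
    5 ^ t + 5 ^ (m - t) ≤ 5 ^ (m - 1) + 5 := by
  have e1 : 5 ^ (m - 1) = 5 ^ (t - 1) * 5 ^ (m - t) := by
    rw [← pow_add]; congr 1; omega
  have e2 : 5 ^ t = 5 * 5 ^ (t - 1) := by
    rw [← pow_succ']; congr 1; omega
  have h1 : 1 ≤ 5 ^ (t - 1) := Nat.one_le_pow _ _ (by omega)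
  have h2 : 5 ≤ 5 ^ (m - t) := by
    calc 5 = 5 ^ 1 := (pow_one 5).symm
    _ ≤ 5 ^ (m - t) := Nat.pow_le_pow_right (by omega) (by omega)
  nlinarith [e1, e2, h1, h2]

end AuxLemmas

/-- **Lemma 4.8.** Suppose `u_{-k} … u_k` (indexed here by `u 0, …, u (2k)`)
is a path of length `2k` that is not `L`-good but all of whose subpaths of length `k` are
`L`-good, where `L ≥ 2k+1` and `L ≥ (h+2)(2k+1)+1`. Then there are `1 ≤ α, β ≤ k` with
`α + β > k` and `(h+2)(2k+1)+1` pairwise internally vertex-disjoint paths of length `α + β`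
between `u_{-α}` and `u_β`. -/
theorem not_good_path_with_good_halves_gives_disjoint_paths
    {V : Type*} [Fintype V] [DecidableEq V] (G : SimpleGraph V)
    (k h : ℕ) (hk : 1 ≤ k) (hh : 1 ≤ h) (L : ℝ)
    (hL1 : (2 * k + 1 : ℝ) ≤ L) (hL2 : (((h + 2) * (2 * k + 1) + 1 : ℕ) : ℝ) ≤ L)
    (u : ℕ → V) (hpath : PathSeq G (2 * k) u)
    (hnotgood : ¬ Good G L (2 * k) u)
    (hsubgood : ∀ j, j ≤ k → Good G L k (fun a => u (j + a))) :
    ∃ α β : ℕ, 1 ≤ α ∧ α ≤ k ∧ 1 ≤ β ∧ β ≤ k ∧ k < α + β ∧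
      ManyDisjointPaths G (α + β) (u (k - α)) (u (k + β)) ((h + 2) * (2 * k + 1) + 1) := by
  classical
  have hL1' : (1 : ℝ) ≤ L := by
    have : (1 : ℝ) ≤ 2 * (k : ℝ) + 1 := by
      have : (1 : ℝ) ≤ (k : ℝ) := by exact_mod_cast hk
      linarith
    linarith
  have hL0 : (0 : ℝ) ≤ L := le_trans zero_le_one hL1'
  -- every short subpath is good
  have sub_good : ∀ i ℓ', 0 < ℓ' → ℓ' ≤ k → i + ℓ' ≤ 2 * k →
      Good G L ℓ' (fun a => u (i + a)) := by
    intro i ℓ' h0 hk' h2k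
    rcases eq_or_lt_of_le hk' with heq | hlt
    · subst heq; exact hsubgood i (by omega)
    · set j := min i k with hjdef
      have hji : j ≤ i := min_le_left _ _
      have hjk : j ≤ k := min_le_right _ _
      have hg := hsubgood j hjk
      rw [Good] at hg
      have h2 := hg.1.2 (i - j) (i - j + ℓ') (by omega) (by omega)
        (by rintro ⟨ha, hb⟩; omega)
      have hd : (i - j + ℓ') - (i - j) = ℓ' := by omega
      rw [hd] at h2
      exact (good_congr G L ℓ' _ _ (fun a _ => by congr 1; omega)).mp h2
  -- minimal length of a bad subpath
  have hex : ∃ n, 0 < n ∧ ∃ i, i + n ≤ 2 * k ∧ ¬ Good G L n (fun a => u (i + a)) := by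
    refine ⟨2 * k, by omega, 0, by omega, ?_⟩
    intro hg
    exact hnotgood ((good_congr G L (2 * k) _ u (fun a _ => by rw [Nat.zero_add])).mp hg)
  set m := Nat.find hex with hmdef
  obtain ⟨hm0, i₀, hi₀, hnotg⟩ := Nat.find_spec hex
  have hm2k : m ≤ 2 * k := Nat.find_le ⟨by omega, 0, by omega, fun hg =>
    hnotgood ((good_congr G L (2 * k) _ u (fun a _ => by rw [Nat.zero_add])).mp hg)⟩
  have hmk : k < m := by
    by_contra hc
    push_neg at hc
    exact hnotg (sub_good i₀ m hm0 hc hi₀)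
  have hi₀k : i₀ < k := by omega
  -- the minimal bad subpath is admissible
  have hadm : Admissible G L m (fun a => u (i₀ + a)) := by
    constructor
    · obtain ⟨ha, hd⟩ := hpath
      constructor
      · intro i hi
        have e : i₀ + (i + 1) = (i₀ + i) + 1 := by omega
        show G.Adj (u (i₀ + i)) (u (i₀ + (i + 1)))
        rw [e]
        exact ha (i₀ + i) (by omega)
      · intro i j hij hj
        exact hd (i₀ + i) (i₀ + j) (by omega) (by omega)
    · intro i j hij hj hne
      have hne' : i ≠ 0 ∨ j ≠ m := by
        by_contra hc; push_neg at hc; exact hne ⟨hc.1, hc.2⟩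
      have hlt : j - i < m := by omega
      have hgood : Good G L (j - i) (fun a => u ((i₀ + i) + a)) := by
        by_contra hng
        exact Nat.find_min hex hlt ⟨by omega, i₀ + i, by omega, hng⟩
      exact (good_congr G L (j - i) _ _ (fun a _ => by congr 1; omega)).mp hgood
  -- the count is large
  have hcount : fBound m L < ((AdmSet G L m (u i₀) (u (i₀ + m))).ncard : ℝ) := by
    rw [good_iff] at hnotg
    by_contra hc
    push_neg at hc
    exact hnotg ⟨hadm, hc⟩
  -- apply the greedy lemma
  set N := (h + 2) * (2 * k + 1) + 1 with hNdef
  set C : ℝ := L ^ (5 ^ (m - 1) + 5) with hCdef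
  have hC0 : (0 : ℝ) ≤ C := pow_nonneg hL0 _
  have hm2 : 2 ≤ m := by omega
  have hAfin : (AdmSet G L m (u i₀) (u (i₀ + m))).Finite := admSet_finite G L m _ _
  have hAmem : ∀ q ∈ AdmSet G L m (u i₀) (u (i₀ + m)),
      PathSeq G m q ∧ q 0 = u i₀ ∧ q m = u (i₀ + m) :=
    fun q hq => ⟨hq.2.2.2.1, hq.1, hq.2.1⟩
  have hCb : ∀ (v : V) (t : ℕ), 0 < t → t < m →
      (((AdmSet G L m (u i₀) (u (i₀ + m))) ∩ {q | q t = v}).ncard : ℝ) ≤ C := by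
    intro v t ht0 htm
    calc (((AdmSet G L m (u i₀) (u (i₀ + m))) ∩ {q | q t = v}).ncard : ℝ)
        ≤ fBound t L * fBound (m - t) L := aux_vertex_bound G L hL1' m t ht0 htm _ _ v
      _ = L ^ (5 ^ t + 5 ^ (m - t)) := (pow_add L _ _).symm
      _ ≤ C := pow_le_pow_right₀ hL1' (aux_exp_ineq t m ht0 htm)
  have hN : (N : ℝ) * ((m : ℝ) * (m : ℝ)) * C <
      ((AdmSet G L m (u i₀) (u (i₀ + m))).ncard : ℝ) := by
    have hmL : (m : ℝ) ≤ L := by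
      have h1 : ((m : ℕ) : ℝ) ≤ ((2 * k : ℕ) : ℝ) := Nat.cast_le.mpr hm2k
      push_cast at h1
      linarith
    have hNL : (N : ℝ) ≤ L := hL2
    have hm0' : (0 : ℝ) ≤ (m : ℝ) := Nat.cast_nonneg _
    have step1 : (N : ℝ) * ((m : ℝ) * (m : ℝ)) * C ≤ L * (L * L) * C := by
      apply mul_le_mul_of_nonneg_right _ hC0
      exact mul_le_mul hNL (mul_le_mul hmL hmL hm0' hL0) (mul_nonneg hm0' hm0') hL0
    have step2 : L * (L * L) * C = L ^ (3 + (5 ^ (m - 1) + 5)) := by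
      rw [pow_add, hCdef]; ring
    have step3 : L ^ (3 + (5 ^ (m - 1) + 5)) ≤ L ^ (5 ^ m) := by
      apply pow_le_pow_right₀ hL1'
      have h5 : 5 ≤ 5 ^ (m - 1) := by
        calc 5 = 5 ^ 1 := (pow_one 5).symm
        _ ≤ 5 ^ (m - 1) := Nat.pow_le_pow_right (by omega) (by omega)
      have e : 5 ^ m = 5 ^ (m - 1) * 5 := by rw [← pow_succ]; congr 1; omega
      omega
    calc (N : ℝ) * ((m : ℝ) * (m : ℝ)) * C ≤ L * (L * L) * C := step1
      _ = L ^ (3 + (5 ^ (m - 1) + 5)) := step2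
      _ ≤ L ^ (5 ^ m) := step3
      _ = fBound m L := rfl
      _ < _ := hcount
  have hmain := aux_greedy G m hm2 (u i₀) (u (i₀ + m)) _ hAfin hAmem C hC0 hCb N hN
  refine ⟨k - i₀, i₀ + m - k, by omega, by omega, by omega, by omega, by omega, ?_⟩
  have e1 : k - (k - i₀) = i₀ := by omega
  have e2 : k + (i₀ + m - k) = i₀ + m := by omega
  have e3 : (k - i₀) + (i₀ + m - k) = m := by omega
  rw [e1, e2, e3]
  exact hmain
end
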